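/- Space KAM abstract-time overhead explosion: define tn := C0⟨C1⟨⋯Cn⟨λy.I⟩⋯⟩⟩ I. For every n ∈ ℕ, the complete Space KAM run σn from the initial state (tn, ε, ε) has Θ(n) transitions and ends in the state (I, ε, ε) (correspondingly tn →wh^{pn} I with pn = Θ(n)), yet σn contains a state whose closure count is at least 2^n; hence the space of σn (and a fortiori its low-level time, which sums per-transition costs at least linear in the source-state size) is Ω(2^n) while the number of β-steps is only Θ(n). -/

import Mathlib

set_option autoImplicit false

/-! λ-terms with variable names in ℕ. -/
inductive Term : Type
  | var : ℕ → Term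
  | lam : ℕ → Term → Term
  | app : Term → Term → Term
deriving DecidableEq

namespace Term

/-- Free variables. -/
def fv : Term → Finset ℕ
  | var x => {x}
  | lam x t => fv t \ {x}
  | app t u => fv t ∪ fv u

/-- A term is closed if it has no free variables. -/
def closed (t : Term) : Prop := t.fv = ∅

/-- Substitution of `u` for the free occurrences of `x`; it is capture-avoiding
whenever the substituted term `u` is closed, which is the only case arising in
Closed Call-by-Name. -/
def subst (x : ℕ) (u : Term) : Term → Term
  | var y => if y = x then u else var y
  | lam y t => if y = x then lam y t else lam y (subst x u t)
  | app t r => app (subst x u t) (subst x u r)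

/-- In-order (left-to-right) enumeration of the constructors (as subterm occurrences). -/
def inorder : Term → List Term
  | var x => [var x]
  | lam x t => lam x t :: inorder t
  | app t u => inorder t ++ app t u :: inorder u

/-- Membership in the deterministic λ-calculus `Λdet`: the right subterm of every
application is a variable or an abstraction. -/
def IsDet : Term → Prop
  | var _ => True
  | lam _ t => IsDet t
  | app t u => IsDet t ∧ IsDet u ∧ ((∃ x, u = var x) ∨ ∃ x r, u = lam x r)

end Term

/-- Weak head reduction: `(λx.t) u r1 … rh →wh t{x:=u} r1 … rh`. -/
inductive Whr : Term → Term → Prop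
  | beta (x : ℕ) (t u : Term) : Whr (Term.app (Term.lam x t) u) (Term.subst x u t)
  | appL {t t' : Term} (u : Term) : Whr t t' → Whr (Term.app t u) (Term.app t' u)

def WhNormal (t : Term) : Prop := ∀ u, ¬ Whr t u

/-- `NSteps R n a b`: exactly `n` `R`-steps from `a` to `b`. -/
inductive NSteps {α : Type _} (R : α → α → Prop) : ℕ → α → α → Prop
  | refl (a : α) : NSteps R 0 a a
  | head {a b c : α} {n : ℕ} : R a b → NSteps R n b c → NSteps R (n + 1) a c

/-! Closures and (local) environments. -/
mutual
  inductive Clo : Type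
    | mk : Term → Env → Clo
  inductive Env : Type
    | nil : Env
    | cons : ℕ → Clo → Env → Env
end

def Env.lookup : Env → ℕ → Option Clo
  | .nil, _ => none
  | .cons y c e, x => if y = x then some c else Env.lookup e x

def Env.dom : Env → Finset ℕ
  | .nil => ∅
  | .cons x _ e => insert x (Env.dom e)

/-- Restriction `e|s` of an environment to a set of variables. -/
def Env.restrict : Env → Finset ℕ → Env
  | .nil, _ => .nil
  | .cons x c e, s => if x ∈ s then .cons x c (Env.restrict e s) else Env.restrict e s

mutual
  /-- Decoding of a closure into a λ-term. -/
  def Clo.decode : Clo → Term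
    | .mk t e => Env.decode t e
  /-- Decoding: `(t, ε)↓ = t`, `(t, [x←c]·e)↓ = (t{x:=c↓}, e)↓`. -/
  def Env.decode : Term → Env → Term
    | t, .nil => t
    | t, .cons x c e => Env.decode (Term.subst x (Clo.decode c) t) e
end

mutual
  /-- Hereditary number of closures in a closure (without sharing). -/
  def Clo.count : Clo → ℕ
    | .mk _ e => 1 + Env.count e
  def Env.count : Env → ℕ
    | .nil => 0
    | .cons _ c e => Clo.count c + Env.count e
end

mutual
  /-- A closure `(t,e)` is closed: `fv t ⊆ dom e` and hereditarily so. -/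
  def Clo.Closed : Clo → Prop
    | .mk t e => t.fv ⊆ e.dom ∧ Env.ClosedE e
  def Env.ClosedE : Env → Prop
    | .nil => True
    | .cons _ c e => Clo.Closed c ∧ Env.ClosedE e
end

mutual
  /-- Environment domain invariant: `dom e = fv t`, hereditarily. -/
  def Clo.DomInv : Clo → Prop
    | .mk t e => e.dom = t.fv ∧ Env.DomInvE e
  def Env.DomInvE : Env → Prop
    | .nil => True
    | .cons _ c e => Clo.DomInv c ∧ Env.DomInvE e
end

/-- Size of the left address of (the first occurrence of) `u` in the code `t0`:
the binary length of its index in the in-order enumeration of the constructors of `t0`. -/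
def addrSize (t0 u : Term) : ℕ := Nat.size (t0.inorder.idxOf u)

mutual
  /-- Size of a closure, relative to the initial code `t0`. -/
  def Clo.size : Term → Clo → ℕ
    | t0, .mk u e => addrSize t0 u + Env.sizeE t0 e
  /-- Size of an environment, relative to the initial code `t0`. -/
  def Env.sizeE : Term → Env → ℕ
    | _, .nil => 0
    | t0, .cons x c e => addrSize t0 (Term.var x) + Clo.size t0 c + Env.sizeE t0 e
end

def stackSize (t0 : Term) (S : List Clo) : ℕ := (S.map (Clo.size t0)).sum

/-- States of the (Naive/Space) KAM. -/
structure State where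
  tm : Term
  env : Env
  stk : List Clo

/-- Size of a state, relative to the initial code `t0`. -/
def State.size (t0 : Term) (s : State) : ℕ :=
  addrSize t0 s.tm + Env.sizeE t0 s.env + stackSize t0 s.stk

/-- Closure count of a state: total number of closures occurring in it,
hereditarily and without sharing (the active term/environment pair is a closure). -/
def State.count (s : State) : ℕ :=
  1 + Env.count s.env + (s.stk.map Clo.count).sum

def State.decode (s : State) : Term :=
  s.stk.foldl (fun a c => Term.app a c.decode) (Env.decode s.tm s.env)

def initState (t : Term) : State := ⟨t, .nil, []⟩

/-! The Naive KAM. -/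
inductive NK : State → State → Prop
  | sea (t u : Term) (e : Env) (S : List Clo) :
      NK ⟨.app t u, e, S⟩ ⟨t, e, .mk u e :: S⟩
  | beta (x : ℕ) (t : Term) (e : Env) (c : Clo) (S : List Clo) :
      NK ⟨.lam x t, e, c :: S⟩ ⟨t, .cons x c e, S⟩
  | sub {x : ℕ} {e : Env} {u : Term} {e' : Env} (S : List Clo) :
      Env.lookup e x = some (.mk u e') → NK ⟨.var x, e, S⟩ ⟨u, e', S⟩

def NKFinal (s : State) : Prop := ∀ s', ¬ NK s s'

/-- Naive KAM runs counting the number of β-transitions. -/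
inductive NKRun : ℕ → State → State → Prop
  | refl (s : State) : NKRun 0 s s
  | sea {t u : Term} {e : Env} {S : List Clo} {s' : State} {n : ℕ} :
      NKRun n ⟨t, e, .mk u e :: S⟩ s' → NKRun n ⟨.app t u, e, S⟩ s'
  | beta {x : ℕ} {t : Term} {e : Env} {c : Clo} {S : List Clo} {s' : State} {n : ℕ} :
      NKRun n ⟨t, .cons x c e, S⟩ s' → NKRun (n + 1) ⟨.lam x t, e, c :: S⟩ s'
  | sub {x : ℕ} {e : Env} {u : Term} {e' : Env} {S : List Clo} {s' : State} {n : ℕ} :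
      Env.lookup e x = some (.mk u e') → NKRun n ⟨u, e', S⟩ s' → NKRun n ⟨.var x, e, S⟩ s'

/-! The Space KAM. -/
inductive SK : State → State → Prop
  | seav {t : Term} {x : ℕ} {e : Env} {c : Clo} (S : List Clo) :
      Env.lookup e x = some c →
      SK ⟨.app t (.var x), e, S⟩ ⟨t, e.restrict t.fv, c :: S⟩
  | seanv {t u : Term} {e : Env} (S : List Clo) :
      (∀ x, u ≠ .var x) →
      SK ⟨.app t u, e, S⟩ ⟨t, e.restrict t.fv, .mk u (e.restrict u.fv) :: S⟩
  | betaw {x : ℕ} {t : Term} {e : Env} (c : Clo) (S : List Clo) :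
      x ∉ t.fv → SK ⟨.lam x t, e, c :: S⟩ ⟨t, e, S⟩
  | betanw {x : ℕ} {t : Term} {e : Env} (c : Clo) (S : List Clo) :
      x ∈ t.fv → SK ⟨.lam x t, e, c :: S⟩ ⟨t, .cons x c e, S⟩
  | sub {x : ℕ} {e : Env} {u : Term} {e' : Env} (S : List Clo) :
      Env.lookup e x = some (.mk u e') → SK ⟨.var x, e, S⟩ ⟨u, e', S⟩

def SKFinal (s : State) : Prop := ∀ s', ¬ SK s s'

/-- Space KAM runs counting the number of β-transitions (`→βw` and `→β¬w`). -/
inductive SKRun : ℕ → State → State → Prop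
  | refl (s : State) : SKRun 0 s s
  | seav {t : Term} {x : ℕ} {e : Env} {c : Clo} {S : List Clo} {s' : State} {n : ℕ} :
      Env.lookup e x = some c →
      SKRun n ⟨t, e.restrict t.fv, c :: S⟩ s' → SKRun n ⟨.app t (.var x), e, S⟩ s'
  | seanv {t u : Term} {e : Env} {S : List Clo} {s' : State} {n : ℕ} :
      (∀ x, u ≠ .var x) →
      SKRun n ⟨t, e.restrict t.fv, .mk u (e.restrict u.fv) :: S⟩ s' →
      SKRun n ⟨.app t u, e, S⟩ s'
  | betaw {x : ℕ} {t : Term} {e : Env} {c : Clo} {S : List Clo} {s' : State} {n : ℕ} :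
      x ∉ t.fv → SKRun n ⟨t, e, S⟩ s' → SKRun (n + 1) ⟨.lam x t, e, c :: S⟩ s'
  | betanw {x : ℕ} {t : Term} {e : Env} {c : Clo} {S : List Clo} {s' : State} {n : ℕ} :
      x ∈ t.fv → SKRun n ⟨t, .cons x c e, S⟩ s' → SKRun (n + 1) ⟨.lam x t, e, c :: S⟩ s'
  | sub {x : ℕ} {e : Env} {u : Term} {e' : Env} {S : List Clo} {s' : State} {n : ℕ} :
      Env.lookup e x = some (.mk u e') → SKRun n ⟨u, e', S⟩ s' → SKRun n ⟨.var x, e, S⟩ s'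

/-! Concrete combinators. -/

/-- I := λx.x -/
def tmI : Term := .lam 0 (.var 0)
/-- θ := λx.λy.y (x x y)  (variables: x := 0, y := 1) -/
def tmTheta : Term := .lam 0 (.lam 1 (.app (.var 1) (.app (.app (.var 0) (.var 0)) (.var 1))))
/-- fix := θ θ -/
def tmFix : Term := .app tmTheta tmTheta
/-- x x y -/
def xxy : Term := .app (.app (.var 0) (.var 0)) (.var 1)
/-- toyaux := λf.λz. z f f I  (f := 3, z := 2) -/
def tmToyaux : Term := .lam 3 (.lam 2 (.app (.app (.app (.var 2) (.var 3)) (.var 3)) tmI))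
/-- toy := fix toyaux -/
def tmToy : Term := .app tmFix tmToyaux

/-- Scott encoding of binary strings (false = 0, true = 1; x0 := 4, x1 := 5, xε := 6):
`⟨ε⟩ := λx0.λx1.λxε.xε`, `⟨b·r⟩ := λx0.λx1.λxε.xb ⟨r⟩`. -/
def encStr : List Bool → Term
  | [] => .lam 4 (.lam 5 (.lam 6 (.var 6)))
  | b :: r => .lam 4 (.lam 5 (.lam 6 (.app (.var (if b then 5 else 4)) (encStr r))))

/-- A variable fresh for `t`. -/
def freshVar (t : Term) : ℕ := t.fv.sup id + 1

/-- η-expansion: `η(t) := λx. t x` with `x ∉ fv t`. -/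
def Term.eta (t : Term) : Term := .lam (freshVar t) (.app t (.var (freshVar t)))

/-- n-fold η-expansion. -/
def etaN (n : ℕ) (t : Term) : Term := Term.eta^[n] t

/-! Environment families for the Naive KAM scrolling invariant
(variables: x := 0, y := 1, z := 2, f := 3, x0 := 4, x1 := 5, xε := 6). -/

/-- `e0 := [x←(θ,ε)]·[y←(toyaux,ε)]`, `e(i+1) := [x←(x,ei)]·[y←(y,ei)]`. -/
def eE : ℕ → Env
  | 0 => .cons 0 (.mk tmTheta .nil) (.cons 1 (.mk tmToyaux .nil) .nil)
  | i + 1 => .cons 0 (.mk (.var 0) (eE i)) (.cons 1 (.mk (.var 1) (eE i)) .nil)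

/-- `e″0 := ε`, `e″(i+1) := [xε←(I,e′i)]·[x1←(f,e′i)]·[x0←(f,e′i)]·e″i`
(with `e′i` inlined). -/
def eDD (s : List Bool) : ℕ → Env
  | 0 => .nil
  | i + 1 =>
    let ep : Env := .cons 2 (.mk (encStr (s.drop i)) (eDD s i)) (.cons 3 (.mk xxy (eE i)) .nil)
    .cons 6 (.mk tmI ep) (.cons 5 (.mk (.var 3) ep) (.cons 4 (.mk (.var 3) ep) (eDD s i)))

/-- `e′i := [z←(⟨b(i+1)⋯bn⟩, e″i)]·[f←(x x y, ei)]`. -/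
def eP (s : List Bool) (i : ℕ) : Env :=
  .cons 2 (.mk (encStr (s.drop i)) (eDD s i)) (.cons 3 (.mk xxy (eE i)) .nil)

/-! The family `tn` for the abstract-time overhead explosion
(variables `xi := i`). -/

/-- `x0 x1 ⋯ xn`. -/
def varsApp : ℕ → Term
  | 0 => .var 0
  | n + 1 => .app (varsApp n) (.var (n + 1))

/-- Term component of `Sn`: `x0 x0` for `n = 0`, `x0 ⋯ xn` for `n ≥ 1`. -/
def sTerm : ℕ → Term
  | 0 => .app (.var 0) (.var 0)
  | n + 1 => varsApp (n + 1)

/-- `e0 := [x0←(I,ε)]`, `e(n+1) := [x(n+1)←Sn]·en`. -/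
def eN : ℕ → Env
  | 0 => .cons 0 (.mk tmI .nil) .nil
  | n + 1 => .cons (n + 1) (.mk (sTerm n) (eN n)) (eN n)

/-- `Sn := (sTerm n, en)`. -/
def sClo (n : ℕ) : Clo := .mk (sTerm n) (eN n)

/-- `Ci⟨t⟩ := λxi. t (x0 ⋯ xi)` (with `C0⟨t⟩ = λx0. t (x0 x0)`). -/
def cPlug (i : ℕ) (t : Term) : Term := .lam i (.app t (sTerm i))

/-- `C0⟨C1⟨⋯Cn⟨t⟩⋯⟩⟩`. -/
def nest (n : ℕ) (t : Term) : Term := (List.range (n + 1)).foldr cPlug t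

/-- `tn := C0⟨C1⟨⋯Cn⟨λy.I⟩⋯⟩⟩ I`. -/
def tN (n : ℕ) : Term := .app (nest n (.lam 1 tmI)) tmI

/-! Global-copy scrolling terms (s′ := 7, z := 2, x := 0, f := 3). -/

/-- `λf.λs′. s′ f f z` (free variable z). -/
def tScroll : Term :=
  .lam 3 (.lam 7 (.app (.app (.app (.var 7) (.var 3)) (.var 3)) (.var 2)))

/-- `glCpy := λx.( fix (λf.λs′. s′ f f x) ) x`. -/
def glCpy : Term :=
  .lam 0 (.app (.app tmFix
    (.lam 3 (.lam 7 (.app (.app (.app (.var 7) (.var 3)) (.var 3)) (.var 0)))))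
    (.var 0))

/-! The Space LAM. -/

structure LState where
  dump : List (Clo × List Clo)
  tm : Term
  env : Env
  stk : List Clo

inductive LAM : LState → LState → Prop
  | sea {D : List (Clo × List Clo)} {t u : Term} {e : Env} {S : List Clo} :
      LAM ⟨D, .app t u, e, S⟩ ⟨(.mk t (e.restrict t.fv), S) :: D, u, e.restrict u.fv, []⟩
  | ret {D : List (Clo × List Clo)} {u : Term} {e' : Env} {S : List Clo}
      {x : ℕ} {t : Term} {e : Env} :
      LAM ⟨(.mk u e', S) :: D, .lam x t, e, []⟩ ⟨D, u, e', .mk (.lam x t) e :: S⟩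
  | betaw {D : List (Clo × List Clo)} {x : ℕ} {t : Term} {e : Env} {c : Clo} {S : List Clo} :
      x ∉ t.fv → LAM ⟨D, .lam x t, e, c :: S⟩ ⟨D, t, e, S⟩
  | betanw {D : List (Clo × List Clo)} {x : ℕ} {t : Term} {e : Env} {c : Clo} {S : List Clo} :
      x ∈ t.fv → LAM ⟨D, .lam x t, e, c :: S⟩ ⟨D, t, .cons x c e, S⟩
  | sub {D : List (Clo × List Clo)} {x : ℕ} {e : Env} {u : Term} {e' : Env} {S : List Clo} :
      Env.lookup e x = some (.mk u e') → LAM ⟨D, .var x, e, S⟩ ⟨D, u, e', S⟩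

def LFinal (ls : LState) : Prop := ∀ ls', ¬ LAM ls ls'

/-- The Space KAM state `(t,e,S)` seen as the Space LAM state `(ε,t,e,S)`. -/
def embed (s : State) : LState := ⟨[], s.tm, s.env, s.stk⟩

def lInit (t : Term) : LState := ⟨[], t, .nil, []⟩

def LState.size (t0 : Term) (ls : LState) : ℕ :=
  (ls.dump.map (fun p => Clo.size t0 p.1 + stackSize t0 p.2)).sum +
    addrSize t0 ls.tm + Env.sizeE t0 ls.env + stackSize t0 ls.stk

/-- A LAM-sequence from `a` whose first state with empty dump after `a` is its target. -/
inductive LRunToEmpty : LState → LState → Prop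
  | single {a b : LState} : LAM a b → b.dump = [] → LRunToEmpty a b
  | cons {a b c : LState} : LAM a b → b.dump ≠ [] → LRunToEmpty b c → LRunToEmpty a c

/-! Log-sensitive Turing machines. -/

/-- Input-tape alphabet {0, 1, L, R}. -/
inductive ISym : Type | zero | one | lend | rend
deriving DecidableEq

/-- Work-tape alphabet {0, 1, □}. -/
inductive WSym : Type | zero | one | blank
deriving DecidableEq

/-- Head moves. -/
inductive Move : Type | L | R | N
deriving DecidableEq

/-- A log-sensitive Turing machine: states `Fin n`, initial state, final states
`qtrue = s1` and `qfalse = s0`, and a deterministic transition function reading the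
current state and the two scanned symbols, writing on the work tape, moving both
heads, and changing state (`none` = halt). -/
structure TM where
  n : ℕ
  start : Fin n
  qtrue : Fin n
  qfalse : Fin n
  δ : Fin n → ISym → WSym → Option (Fin n × WSym × Move × Move)

/-- A configuration: state, input-head position (on the tape `L i R`), and the
work tape split as (left part, reversed) / scanned symbol / (right part). -/
structure Config (M : TM) where
  q : Fin M.n
  ipos : ℕ
  wl : List WSym
  wcur : WSym
  wr : List WSym

/-- The symbol of the input tape `L i R` at a given position. -/
def inputAt (i : List Bool) (p : ℕ) : ISym :=
  if p = 0 then .lend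
  else if h : p - 1 < i.length then (if i.get ⟨p - 1, h⟩ then .one else .zero)
  else .rend

def moveIpos (p : ℕ) : Move → ℕ
  | .L => p - 1
  | .R => p + 1
  | .N => p

def moveWork (wl : List WSym) (c : WSym) (wr : List WSym) : Move → List WSym × WSym × List WSym
  | .L => match wl with
    | [] => ([], .blank, c :: wr)
    | a :: l => (l, a, c :: wr)
  | .R => match wr with
    | [] => (c :: wl, .blank, [])
    | a :: r => (c :: wl, a, r)
  | .N => (wl, c, wr)

/-- One transition of the TM `M` on input `i`. -/
def TMStep (M : TM) (i : List Bool) (c c' : Config M) : Prop :=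
  ∃ q' w mi mw, M.δ c.q (inputAt i c.ipos) c.wcur = some (q', w, mi, mw) ∧
    c'.q = q' ∧ c'.ipos = moveIpos c.ipos mi ∧
    (c'.wl, c'.wcur, c'.wr) = moveWork c.wl w c.wr mw

def initConfig (M : TM) : Config M := ⟨M.start, 0, [], .blank, []⟩

/-- Number of work-tape cells used by a configuration. -/
def Config.workSize {M : TM} (c : Config M) : ℕ := c.wl.length + 1 + c.wr.length

def TMFinal (M : TM) (i : List Bool) (c : Config M) : Prop := ∀ c', ¬ TMStep M i c c'

/-- `⟨1⟩ := λx.λy.x` and `⟨0⟩ := λx.λy.y`. -/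
def encBool (b : Bool) : Term :=
  if b then .lam 0 (.lam 1 (.var 0)) else .lam 0 (.lam 1 (.var 1))

/-! After the first `i + 1` contexts have been entered, the Space KAM is in the state
`(C(i+1)⟨⋯⟩ (x0 ⋯ xi), e_i, ε)` with `e_(i+1) = [x(i+1) ← (x0 ⋯ xi, e_i)] · e_i`. Each layer costs one
`→sea¬v` and one `→β¬w` transition, but `x0 ⋯ xi` uses every variable of `e_i`, so the restriction
to free variables never drops an entry and the environment doubles at each layer: `e_n` holds
`2^(n+1) - 1` closures. Weak head reduction follows the same path with one β-step per layer. -/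

namespace NSteps

variable {α : Type*} {R : α → α → Prop}

theorem single {a b : α} (h : R a b) : NSteps R 1 a b := .head h (.refl b)

theorem trans {m n : ℕ} {a b c : α} (hab : NSteps R m a b) (hbc : NSteps R n b c) :
    NSteps R (m + n) a c := by
  induction hab with
  | refl => simpa using hbc
  | head hab _ ih => rw [Nat.add_right_comm]; exact .head hab (ih hbc)

theorem reflTransGen {n : ℕ} {a b : α} (h : NSteps R n a b) : Relation.ReflTransGen R a b := by
  induction h with
  | refl => exact .refl
  | head hab _ ih => exact .head hab ih

theorem descend {m : ℕ} (f : ℕ → ℕ → α) (hf : ∀ i k, NSteps R m (f i (k + 1)) (f (i + 1) k))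
    (i k : ℕ) : NSteps R (m * k) (f i k) (f (i + k) 0) := by
  induction k generalizing i with
  | zero => exact .refl _
  | succ k ih => simpa [Nat.mul_succ, Nat.add_comm m, Nat.add_assoc, Nat.add_comm 1] using
      (hf i k).trans (ih (i + 1))

end NSteps

namespace Term

theorem subst_of_notMem_fv {x : ℕ} {u : Term} :
    ∀ {t : Term}, x ∉ t.fv → subst x u t = t
  | var y, h => by
      simp only [fv, Finset.mem_singleton] at h
      simp [subst, Ne.symm h]
  | lam y t, h => by
      by_cases hy : y = x
      · simp [subst, hy]
      · have : x ∉ t.fv := by simpa [fv, Ne.symm hy] using h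
        simp [subst, hy, subst_of_notMem_fv this]
  | app t r, h => by
      simp only [fv, Finset.mem_union, not_or] at h
      simp [subst, subst_of_notMem_fv h.1, subst_of_notMem_fv h.2]

theorem subst_lam_of_ne {x y : ℕ} (u t : Term) (h : y ≠ x) :
    subst x u (lam y t) = lam y (subst x u t) := by
  simp [subst, h]

end Term

namespace Env

theorem restrict_empty : ∀ e : Env, e.restrict ∅ = .nil
  | .nil => rfl
  | .cons _ _ e => by simp [restrict, restrict_empty e]

theorem restrict_of_dom_subset : ∀ {e : Env} {s : Finset ℕ}, e.dom ⊆ s → e.restrict s = e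
  | .nil, _, _ => rfl
  | .cons x c e, s, h => by
      rw [dom, Finset.insert_subset_iff] at h
      simp [restrict, h.1, restrict_of_dom_subset h.2]

end Env

/-- `restC i k := Ci⟨C(i+1)⟨⋯C(i+k-1)⟨λy.I⟩⋯⟩⟩`. -/
def restC (i : ℕ) : ℕ → Term
  | 0 => .lam 1 tmI
  | k + 1 => cPlug i (restC (i + 1) k)

theorem foldr_range'_cPlug (k i : ℕ) :
    (List.range' i k).foldr cPlug (.lam 1 tmI) = restC i k := by
  induction k generalizing i with
  | zero => rfl
  | succ k ih => simp [List.range'_succ, ih, restC]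

theorem tN_eq (n : ℕ) : tN n = .app (restC 0 (n + 1)) tmI := by
  rw [tN, nest, List.range_eq_range', foldr_range'_cPlug]

theorem fv_tmI : tmI.fv = ∅ := by simp [tmI, Term.fv]

theorem fv_varsApp (j : ℕ) : (varsApp j).fv = Finset.range (j + 1) := by
  induction j with
  | zero => simp [varsApp, Term.fv]
  | succ j ih => rw [varsApp, Term.fv, ih, Term.fv, Finset.range_add_one (n := j + 1),
      Finset.union_comm, Finset.insert_eq]

theorem fv_sTerm (i : ℕ) : (sTerm i).fv = Finset.range (i + 1) := by
  cases i with
  | zero => simp [sTerm, Term.fv]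
  | succ i => exact fv_varsApp (i + 1)

theorem sTerm_ne_var (i x : ℕ) : sTerm i ≠ .var x := by
  cases i <;> simp [sTerm, varsApp]

theorem fv_restC_succ (k i : ℕ) : (restC i (k + 1)).fv = Finset.range i := by
  induction k generalizing i with
  | zero =>
      ext x
      simp [restC, cPlug, Term.fv, fv_tmI, fv_sTerm]
      omega
  | succ k ih =>
      ext x
      simp only [restC, cPlug, Term.fv] at ih ⊢
      rw [ih, fv_sTerm]
      simp
      omega

theorem dom_eN (i : ℕ) : (eN i).dom = Finset.range (i + 1) := by
  induction i with
  | zero => rfl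
  | succ i ih => rw [eN, Env.dom, ih, Finset.range_add_one (n := i + 1)]

theorem count_eN (i : ℕ) : (eN i).count + 1 = 2 ^ (i + 1) := by
  induction i with
  | zero => rfl
  | succ i ih =>
      simp only [eN, Env.count, Clo.count] at ih ⊢
      rw [pow_succ]
      omega

theorem restrict_eN_of_range_subset {i : ℕ} {s : Finset ℕ} (h : Finset.range (i + 1) ⊆ s) :
    (eN i).restrict s = eN i :=
  Env.restrict_of_dom_subset (dom_eN i ▸ h)

/-- The Space KAM state once the contexts `C0, …, Ci` have been entered and `k` remain. -/
def layerState (i k : ℕ) : State := ⟨.app (restC (i + 1) k) (sTerm i), eN i, []⟩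

theorem count_layerState (i k : ℕ) : (layerState i k).count = 2 ^ (i + 1) := by
  rw [State.count, layerState, ← count_eN]
  simp [Nat.add_comm]

theorem mem_fv_layer_body (i k : ℕ) : i ∈ (Term.app (restC (i + 1) k) (sTerm i)).fv := by
  simp [Term.fv, fv_sTerm]

theorem sk_initState_tN (n : ℕ) : NSteps SK 2 (initState (tN n)) (layerState 0 n) := by
  rw [initState, tN_eq]
  refine .head (SK.seanv [] fun x => by simp [tmI]) (.single ?_)
  exact SK.betanw _ [] (mem_fv_layer_body 0 n)

theorem sk_layerState_succ (i k : ℕ) :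
    NSteps SK 2 (layerState i (k + 1)) (layerState (i + 1) k) := by
  refine .head (SK.seanv [] (sTerm_ne_var i)) ?_
  rw [restrict_eN_of_range_subset (fv_sTerm i).ge,
    restrict_eN_of_range_subset (fv_restC_succ k (i + 1)).ge]
  exact .single (SK.betanw _ [] (mem_fv_layer_body (i + 1) k))

theorem sk_layerState_zero (i : ℕ) : NSteps SK 2 (layerState i 0) ⟨tmI, .nil, []⟩ := by
  refine .head (SK.seanv [] (sTerm_ne_var i)) ?_
  rw [show (restC (i + 1) 0).fv = ∅ by simp [restC, Term.fv, fv_tmI], Env.restrict_empty]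
  exact .single (SK.betaw _ [] (by simp [fv_tmI]))

theorem sk_run_tN (n : ℕ) : NSteps SK (2 * n + 4) (initState (tN n)) ⟨tmI, .nil, []⟩ := by
  have h := ((sk_initState_tN n).trans (NSteps.descend layerState sk_layerState_succ 0 n)).trans
    (sk_layerState_zero _)
  rwa [show 2 + 2 * n + 2 = 2 * n + 4 by ring] at h

theorem skFinal_tmI : SKFinal ⟨tmI, .nil, []⟩ := by
  intro s h
  cases h

theorem whNormal_tmI : WhNormal tmI := by
  intro u h
  cases h

/-- The weak head counterpart of the environment `eN i`, applied as iterated substitution. -/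
def substUpTo : ℕ → Term → Term
  | 0, t => Term.subst 0 tmI t
  | j + 1, t => Term.subst (j + 1) (substUpTo j (sTerm j)) (substUpTo j t)

theorem substUpTo_app (i : ℕ) (a b : Term) :
    substUpTo i (.app a b) = .app (substUpTo i a) (substUpTo i b) := by
  induction i with
  | zero => rfl
  | succ j ih => simp only [substUpTo, ih, Term.subst]

theorem substUpTo_lam {i x : ℕ} (t : Term) (h : i < x) :
    substUpTo i (.lam x t) = .lam x (substUpTo i t) := by
  induction i with
  | zero => exact Term.subst_lam_of_ne _ _ (by omega)
  | succ j ih => rw [substUpTo, ih (by omega), Term.subst_lam_of_ne _ _ (by omega), substUpTo]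

theorem substUpTo_of_closed {t : Term} (h : t.closed) (i : ℕ) : substUpTo i t = t := by
  have hx : ∀ x, x ∉ t.fv := by simp [show t.fv = ∅ from h]
  induction i with
  | zero => exact Term.subst_of_notMem_fv (hx 0)
  | succ j ih => rw [substUpTo, ih, Term.subst_of_notMem_fv (hx _)]

/-- The weak head reduct of `tN n` after `i + 1` β-steps, when `k` contexts remain. -/
def whTerm (i k : ℕ) : Term := .app (substUpTo i (restC (i + 1) k)) (substUpTo i (sTerm i))

theorem whr_tN (n : ℕ) : Whr (tN n) (whTerm 0 n) := by
  rw [tN_eq]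
  exact Whr.beta 0 _ tmI

theorem whr_whTerm_succ (i k : ℕ) : Whr (whTerm i (k + 1)) (whTerm (i + 1) k) := by
  rw [whTerm, restC, cPlug, substUpTo_lam _ (Nat.lt_succ_self i), substUpTo_app]
  exact Whr.beta (i + 1) _ _

theorem whr_whTerm_zero (i : ℕ) : Whr (whTerm i 0) tmI := by
  have hclosed : (restC (i + 1) 0).closed := by simp [Term.closed, restC, Term.fv, fv_tmI]
  rw [whTerm, substUpTo_of_closed hclosed, restC]
  simpa [Term.subst_of_notMem_fv, fv_tmI] using Whr.beta 1 tmI (substUpTo i (sTerm i))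

theorem whr_run_tN (n : ℕ) : NSteps Whr (n + 2) (tN n) tmI := by
  have h := ((NSteps.single (whr_tN n)).trans
    (NSteps.descend whTerm (fun i k => .single (whr_whTerm_succ i k)) 0 n)).trans
    (.single (whr_whTerm_zero _))
  rwa [show 1 + 1 * n + 1 = n + 2 by ring] at h

/-- Space KAM abstract-time overhead explosion on
`tn := C0⟨C1⟨⋯Cn⟨λy.I⟩⋯⟩⟩ I`: the complete run has `Θ(n)` transitions and ends
in `(I, ε, ε)` (and `tn →wh^{Θ(n)} I`), yet some state of the run has closure
count at least `2^n`. -/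
theorem space_kam_time_explosion :
    ∃ k1 k2 : ℕ, 0 < k1 ∧ 0 < k2 ∧ ∀ n : ℕ,
      (∃ m : ℕ, k1 * (n + 1) ≤ m ∧ m ≤ k2 * (n + 1) ∧
        NSteps SK m (initState (tN n)) ⟨tmI, .nil, []⟩ ∧ SKFinal ⟨tmI, .nil, []⟩) ∧
      (∃ p : ℕ, k1 * (n + 1) ≤ p ∧ p ≤ k2 * (n + 1) ∧
        NSteps Whr p (tN n) tmI ∧ WhNormal tmI) ∧
      (∃ st : State, Relation.ReflTransGen SK (initState (tN n)) st ∧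
        2 ^ n ≤ st.count) := by
  refine ⟨1, 4, one_pos, by norm_num, fun n => ⟨?_, ?_, ?_⟩⟩
  · exact ⟨2 * n + 4, by omega, by omega, sk_run_tN n, skFinal_tmI⟩
  · exact ⟨n + 2, by omega, by omega, whr_run_tN n, whNormal_tmI⟩
  · have hreach := (sk_initState_tN n).trans (NSteps.descend layerState sk_layerState_succ 0 n)
    refine ⟨layerState n 0, by simpa using hreach.reflTransGen, ?_⟩
    rw [count_layerState]
    exact Nat.pow_le_pow_right two_pos n.le_succ
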